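/- Let there be k skills, and for a landmark f suppose the set of reachable terminal states has cardinality at most k. If a skill assignment maps each skill to a nonempty set of terminal states and two skills i and j share a common terminal state, then replacing skill i's terminal set with a nonempty set disjoint from the terminal sets of all other skills strictly increases p(z_j | s) for every state s previously shared between i and j (probabilities computed with uniform skill prior and uniform terminal-state distribution within each skill's terminal set), and does not decrease p(z_l | s') for any other skill l and state s' in its terminal set. -/
import Mathlib


/-- Bayes posterior of skill `l` at state `s`, with uniform skill prior and uniform
terminal-state distribution within each skill's terminal set. -/
noncomputable def skillPost {S : Type*} [DecidableEq S] {k : ℕ}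
    (G : Fin k → Finset S) (l : Fin k) (s : S) : ℝ :=
  ((if s ∈ G l then (1 : ℝ) / (G l).card else 0) * (1 / k)) /
    ∑ j, (if s ∈ G j then (1 : ℝ) / (G j).card else 0) * (1 / k)

/-- With `k` skills whose nonempty terminal sets cover at most `k` reachable
terminal states, if skills `i` and `j` share a terminal state, then replacing skill `i`'s
terminal set by a nonempty set disjoint from all other skills' terminal sets strictly
increases `p(z_j|s)` on every state previously shared between `i` and `j`, and does not
decrease `p(z_l|s')` for any other skill `l` at any `s' ∈ G l`. -/
theorem stmt5 {S : Type*} [DecidableEq S] (k : ℕ) (hk : 0 < k)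
    (G : Fin k → Finset S) (hGne : ∀ l, (G l).Nonempty)
    (hcard : (Finset.univ.biUnion G).card ≤ k)
    (i j : Fin k) (hij : i ≠ j) (hshare : (G i ∩ G j).Nonempty)
    (G' : Fin k → Finset S) (hG'ne : (G' i).Nonempty)
    (hdisj : ∀ l, l ≠ i → Disjoint (G' i) (G l))
    (hG'eq : ∀ l, l ≠ i → G' l = G l) :
    (∀ s ∈ G i ∩ G j, skillPost G j s < skillPost G' j s) ∧
    (∀ l, l ≠ i → ∀ s' ∈ G l, skillPost G l s' ≤ skillPost G' l s') := by
  have hkpos : (0:ℝ) < (k:ℝ) := by exact_mod_cast hk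
  set t : (Fin k → Finset S) → Fin k → S → ℝ :=
    fun H l s => (if s ∈ H l then (1:ℝ)/(H l).card else 0) * (1/k) with ht
  have tnonneg : ∀ H l s, 0 ≤ t H l s := by
    intro H l s
    apply mul_nonneg
    · split <;> positivity
    · positivity
  have tpos : ∀ (H : Fin k → Finset S) l s, s ∈ H l → 0 < t H l s := by
    intro H l s hs
    have hc : 0 < ((H l).card : ℝ) := by
      exact_mod_cast Finset.card_pos.mpr ⟨s, hs⟩
    simp only [ht, if_pos hs]
    positivity
  have denpos : ∀ (H : Fin k → Finset S) l s, s ∈ H l → 0 < ∑ m, t H m s := by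
    intro H l s hs
    exact Finset.sum_pos' (fun m _ => tnonneg H m s) ⟨l, Finset.mem_univ l, tpos H l s hs⟩
  have hform : ∀ (H : Fin k → Finset S) l s,
      skillPost H l s = t H l s / ∑ m, t H m s := fun _ _ _ => rfl
  constructor
  · intro s hs
    rw [Finset.mem_inter] at hs
    obtain ⟨hsi, hsj⟩ := hs
    have hsj' : s ∈ G' j := by rw [hG'eq j hij.symm]; exact hsj
    have hsni : s ∉ G' i := fun h => Finset.disjoint_left.mp (hdisj j hij.symm) h hsj
    rw [hform, hform]
    have hnum : t G j s = t G' j s := by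
      simp only [ht, hG'eq j hij.symm]
    rw [hnum]
    apply div_lt_div_of_pos_left (tpos G' j s hsj') (denpos G' j s hsj')
    apply Finset.sum_lt_sum
    · intro m _
      by_cases hm : m = i
      · subst hm
        simp only [ht, if_neg hsni, zero_mul]
        exact tnonneg G m s
      · simp only [ht, hG'eq m hm]
        exact le_refl _
    · exact ⟨i, Finset.mem_univ i, by
        simp only [ht, if_neg hsni, zero_mul]
        exact tpos G i s hsi⟩
  · intro l hl s' hs'
    have hs'' : s' ∈ G' l := by rw [hG'eq l hl]; exact hs'
    have hsni : s' ∉ G' i := fun h => Finset.disjoint_left.mp (hdisj l hl) h hs'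
    rw [hform, hform]
    have hnum : t G l s' = t G' l s' := by
      simp only [ht, hG'eq l hl]
    rw [hnum]
    apply div_le_div_of_nonneg_left (tnonneg G' l s') (denpos G' l s' hs'')
    apply Finset.sum_le_sum
    intro m _
    by_cases hm : m = i
    · subst hm
      simp only [ht, if_neg hsni, zero_mul]
      exact tnonneg G m s'
    · simp only [ht, hG'eq m hm]
      exact le_refl _
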